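/- arXiv:0809.2373 — 2 statements merged into one kernel-verified Lean document; each statement's English description precedes it below -/
import Mathlib

section
/- Let f : X' → X be a continuous map of topological spaces such that for every space T and every map p : T → X, the pullback T ×_X X' → T admits a section and a fiberwise deformation retraction onto the image of that section (f is shrinkable). Then for every compact space Y, the induced map f_* : C(Y, X') → C(Y, X) on mapping spaces (compact-open topology) is a homotopy equivalence. -/
open unitInterval

/-- The pullback `T ×_X X'` of `p : T → X` along `f : X' → X`, as a subspace of the
product. -/
abbrev mapPullback {T X' X : Type} [TopologicalSpace T] [TopologicalSpace X']
    [TopologicalSpace X] (p : C(T, X)) (f : C(X', X)) : Type :=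
  {q : T × X' // p q.1 = f q.2}

/-- `f : X' → X` is shrinkable: for every space `T` and map `p : T → X`, the pullback
`T ×_X X' → T` admits a section together with a fiberwise deformation retraction onto
the image of that section. -/
def Shrinkable {X' X : Type} [TopologicalSpace X'] [TopologicalSpace X]
    (f : C(X', X)) : Prop :=
  ∀ (T : Type) (_ : TopologicalSpace T) (p : C(T, X)),
    ∃ (s : C(T, mapPullback p f)) (H : C(mapPullback p f × I, mapPullback p f)),
      (∀ t : T, (s t).1.1 = t) ∧
      (∀ z : mapPullback p f, H (z, 0) = z) ∧
      (∀ z : mapPullback p f, H (z, 1) = s z.1.1) ∧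
      (∀ (z : mapPullback p f) (t : I), (H (z, t)).1.1 = z.1.1)

/-- Pairing a continuous map with a constant, jointly continuously. -/
lemma continuous_prodMk_const {Y A Z : Type} [TopologicalSpace Y] [TopologicalSpace A]
    [TopologicalSpace Z] :
    Continuous fun q : C(Y, A) × Z => q.1.prodMk (ContinuousMap.const Y q.2) := by
  simp_rw [continuous_iff_continuousAt, ContinuousAt, ContinuousMap.tendsto_nhds_compactOpen]
  rintro ⟨h, t⟩ K hK U hU hKU
  have hsub : (h '' K) ×ˢ ({t} : Set Z) ⊆ U := by
    rintro ⟨a, b⟩ ⟨⟨y, hy, rfl⟩, rfl⟩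
    exact hKU hy
  obtain ⟨V, W, hVopen, hWopen, hV, hW, hVW⟩ :=
    generalized_tube_lemma (hK.image h.continuous) isCompact_singleton hU hsub
  have hmem : ∀ᶠ q : C(Y, A) × Z in nhds (h, t),
      Set.MapsTo q.1 K V ∧ q.2 ∈ W := by
    refine Filter.Eventually.and ?_ ?_
    · exact (continuous_fst.tendsto (h, t)).eventually
        (ContinuousMap.eventually_mapsTo hK hVopen (fun y hy => hV ⟨y, hy, rfl⟩))
    · exact (continuous_snd.tendsto (h, t)).eventually
        (hWopen.mem_nhds (hW rfl) : ∀ᶠ z in nhds t, z ∈ W)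
  filter_upwards [hmem] with q hq y hy
  exact hVW ⟨hq.1 hy, hq.2⟩

/-- If `f : X' → X` is shrinkable, then for every compact space `Y` the
induced map `f_* : C(Y, X') → C(Y, X)` (with compact-open topologies) is a homotopy
equivalence. -/
theorem shrinkable_induces_homotopy_equiv_on_mapping_spaces (X' X Y : Type)
    [TopologicalSpace X'] [TopologicalSpace X] [TopologicalSpace Y] [CompactSpace Y]
    (f : C(X', X)) (hf : Shrinkable f)
    (F : C(C(Y, X'), C(Y, X))) (hF : ∀ g : C(Y, X'), F g = f.comp g) :
    ∃ Ginv : C(C(Y, X), C(Y, X')),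
      (F.comp Ginv).Homotopic (ContinuousMap.id _) ∧
      (Ginv.comp F).Homotopic (ContinuousMap.id _) := by
  -- Apply shrinkability to `p = id : X → X`.
  obtain ⟨s, H, hs, h0, h1, hfib⟩ := hf X ‹_› (ContinuousMap.id X)
  set P := mapPullback (ContinuousMap.id X) f with hP
  -- `g : X → X'` is a continuous section of `f`.
  let g : C(X, X') := ⟨fun x => (s x).1.2,
    (continuous_snd.comp continuous_subtype_val).comp s.continuous⟩
  have hg : ∀ x : X, f (g x) = x := by
    intro x
    have h2 := (s x).2
    simp only [ContinuousMap.id_apply] at h2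
    rw [show g x = (s x).1.2 from rfl, ← h2, hs]
  -- inclusion `X' → P`, `x ↦ (f x, x)`.
  let ι : C(X', P) := ⟨fun x => ⟨(f x, x), rfl⟩,
    Continuous.subtype_mk (f.continuous.prodMk continuous_id) _⟩
  -- the second-coordinate projection of the homotopy as a family of self-maps of `X'`.
  let m2 : C(I × X', X') := ⟨fun q => (H (ι q.2, q.1)).1.2,
    (continuous_snd.comp continuous_subtype_val).comp <|
      H.continuous.comp ((ι.continuous.comp continuous_snd).prodMk continuous_fst)⟩
  let G2 : C(I, C(X', X')) := ContinuousMap.curry m2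
  have hG2_0 : ∀ x : X', G2 0 x = x := by
    intro x
    show (H (ι x, 0)).1.2 = x
    rw [h0]
    rfl
  have hG2_1 : ∀ x : X', G2 1 x = g (f x) := by
    intro x
    show (H (ι x, 1)).1.2 = (s (f x)).1.2
    rw [h1]
    rfl
  refine ⟨⟨fun h => g.comp h, ContinuousMap.continuous_postcomp g⟩, ?_, ?_⟩
  · -- `F ∘ Ginv = id` exactly.
    have : F.comp ⟨fun h => g.comp h, ContinuousMap.continuous_postcomp g⟩ =
        ContinuousMap.id C(Y, X) := by
      ext h y
      simp [hF, hg]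
    rw [this]
  · -- homotopy from `Ginv ∘ F` to `id` via `(t, k) ↦ y ↦ (H (ι (k y), σ t)).1.2`.
    let E : C(P × I, X') := ⟨fun z => (H z).1.2,
      (continuous_snd.comp continuous_subtype_val).comp H.continuous⟩
    have hcont : Continuous (fun q : I × C(Y, X') =>
        E.comp ((ι.comp q.2).prodMk (ContinuousMap.const Y (σ q.1)))) := by
      exact (ContinuousMap.continuous_postcomp E).comp <|
        continuous_prodMk_const.comp
          ((ContinuousMap.continuous_postcomp ι |>.comp continuous_snd).prodMk
            (continuous_symm.comp continuous_fst))
    let Kmap : C(I × C(Y, X'), C(Y, X')) :=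
      ⟨fun q => E.comp ((ι.comp q.2).prodMk (ContinuousMap.const Y (σ q.1))), hcont⟩
    refine ⟨{ toContinuousMap := Kmap, map_zero_left := ?_, map_one_left := ?_ }⟩
    · intro k
      ext y
      show (H (ι (k y), σ 0)).1.2 = _
      rw [symm_zero, h1]
      simp [hF]
      rfl
    · intro k
      ext y
      show (H (ι (k y), σ 1)).1.2 = _
      rw [symm_one, h0]
      rfl
end

section
/- Let X be a compactly generated topological space and K a compact Hausdorff space. Then the product space X × K is compactly generated. -/
/-- The product of a compactly generated space with a compact
Hausdorff space is compactly generated. -/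
theorem compactlyGenerated_prod_compact (X K : Type) [TopologicalSpace X]
    [TopologicalSpace K] [CompactlyGeneratedSpace X] [CompactSpace K] [T2Space K] :
    CompactlyGeneratedSpace (X × K) := by
  refine compactlyGeneratedSpace_of_continuous_maps fun {Y} _ f h ↦ ?_
  -- the curried map F : X → C(K, Y)
  have slice : ∀ x : X, Continuous fun k : K ↦ f (x, k) := fun x ↦
    h K (fun k ↦ (x, k)) (Continuous.prodMk continuous_const continuous_id)
  set F : X → C(K, Y) := fun x ↦ ⟨fun k ↦ f (x, k), slice x⟩ with hFdef
  have hF : Continuous F := by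
    refine continuous_from_compactlyGeneratedSpace F fun L _ _ _ g hg ↦ ?_
    apply ContinuousMap.continuous_of_continuous_uncurry
    have : Continuous fun p : L × K ↦ f (g p.1, p.2) :=
      h (L × K) (fun p ↦ (g p.1, p.2))
        ((hg.comp continuous_fst).prodMk continuous_snd)
    exact this
  have := ContinuousMap.continuous_uncurry_of_continuous ⟨F, hF⟩
  have heq : f = Function.uncurry fun x k ↦ (⟨F, hF⟩ : C(X, C(K, Y))) x k := by
    ext p; rfl
  rw [heq]
  exact this
end
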